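/- arXiv:1705.01287 — 4 statements merged into one kernel-verified Lean document; each statement's English description precedes it below -/
import Mathlib

section
/- For α ∈ (-1/2, 1/2), the integral Γ_α² := ∫_{-∞}^{∞} (q_α(y-1) - q_α(y))² dy is finite, where q_α(x) = (a·1{x ≥ 0} + b·1{x < 0})|x|^α with a, b ≥ 0, not both zero. -/
open Real MeasureTheory

noncomputable def qCusp (a b α : ℝ) (x : ℝ) : ℝ :=
  (if 0 ≤ x then a else b) * |x| ^ α

/-- MVT bound: for `t ≥ 1` and `α ≤ 1`, `|(t+1)^α - t^α| ≤ |α| t^(α-1)`. -/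
lemma rpow_add_one_sub_rpow_le {α t : ℝ} (hα : α ≤ 1) (ht : 1 ≤ t) :
    |(t + 1) ^ α - t ^ α| ≤ |α| * t ^ (α - 1) := by
  have ht0 : (0:ℝ) < t := lt_of_lt_of_le one_pos ht
  have h := Convex.norm_image_sub_le_of_norm_hasDerivWithin_le
    (f := fun x : ℝ => x ^ α) (f' := fun x : ℝ => α * x ^ (α - 1))
    (s := Set.Icc t (t + 1)) (C := |α| * t ^ (α - 1))
    (fun x hx => (Real.hasDerivAt_rpow_const
      (Or.inl (ne_of_gt (lt_of_lt_of_le ht0 hx.1)))).hasDerivWithinAt)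
    (fun x hx => by
      have hx0 : (0:ℝ) < x := lt_of_lt_of_le ht0 hx.1
      rw [Real.norm_eq_abs, abs_mul, abs_of_nonneg (Real.rpow_nonneg hx0.le _)]
      exact mul_le_mul_of_nonneg_left
        (Real.rpow_le_rpow_of_nonpos ht0 hx.1 (by linarith)) (abs_nonneg α))
    (convex_Icc _ _)
    (Set.left_mem_Icc.2 (by linarith)) (Set.right_mem_Icc.2 (by linarith))
  simpa using h

lemma intervalIntegrable_abs_rpow {r : ℝ} (h : -1 < r) (c d : ℝ) :
    IntervalIntegrable (fun x : ℝ => |x| ^ r) volume c d := by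
  have key : ∀ e : ℝ, 0 ≤ e → IntervalIntegrable (fun x : ℝ => |x| ^ r) volume 0 e := by
    intro e he
    have h1 := intervalIntegral.intervalIntegrable_rpow' (a := 0) (b := e) h
    rw [intervalIntegrable_iff, Set.uIoc_of_le he] at h1 ⊢
    exact h1.congr_fun (fun x hx => by rw [abs_of_nonneg (le_of_lt hx.1)])
      measurableSet_Ioc
  have key' : ∀ e : ℝ, IntervalIntegrable (fun x : ℝ => |x| ^ r) volume 0 e := by
    intro e
    rcases le_or_gt 0 e with he | he
    · exact key e he
    · have h0 := key (-e) (by linarith)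
      have h2 := (IntervalIntegrable.iff_comp_neg (f := fun x : ℝ => |x| ^ r)
        (a := 0) (b := e)).mpr (by simpa [abs_neg] using h0)
      simpa using h2
  exact ((key' c).symm.trans (key' d))

theorem cusp_kernel_square_integrable (a b α : ℝ) (ha : 0 ≤ a) (hb : 0 ≤ b)
    (hab : ¬ (a = 0 ∧ b = 0)) (hα : α ∈ Set.Ioo (-(1/2) : ℝ) (1/2)) :
    Integrable (fun y : ℝ => (qCusp a b α (y - 1) - qCusp a b α y) ^ 2) := by
  obtain ⟨hα1, hα2⟩ := hα
  set g : ℝ → ℝ := fun y => (qCusp a b α (y - 1) - qCusp a b α y) ^ 2 with hg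
  have hmq : Measurable (qCusp a b α) := by
    unfold qCusp
    apply Measurable.mul
    · exact Measurable.ite measurableSet_Ici measurable_const measurable_const
    · measurability
  have hmg : Measurable g := by
    apply Measurable.pow _ measurable_const
    exact ((hmq.comp (measurable_id.sub measurable_const)).sub hmq)
  have hg_nonneg : ∀ y, 0 ≤ g y := fun y => sq_nonneg _
  have hexp : (2 * α - 2 : ℝ) < -1 := by linarith
  -- bound on cusp
  have hq_abs : ∀ x : ℝ, |qCusp a b α x| ≤ (a + b) * |x| ^ α := by
    intro x
    unfold qCusp
    rw [abs_mul, abs_of_nonneg (Real.rpow_nonneg (abs_nonneg x) α)]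
    have : |if 0 ≤ x then a else b| ≤ a + b := by
      split <;> [rw [abs_of_nonneg ha]; rw [abs_of_nonneg hb]] <;> linarith
    exact mul_le_mul_of_nonneg_right this (Real.rpow_nonneg (abs_nonneg x) α)
  -- middle part
  have hmid : IntegrableOn g (Set.Icc (-1 : ℝ) 2) := by
    have hint : IntegrableOn (fun y : ℝ =>
        2 * (a + b) ^ 2 * (|y - 1| ^ (α * 2) + |y| ^ (α * 2))) (Set.Icc (-1 : ℝ) 2) := by
      have h1 : IntervalIntegrable (fun x : ℝ => |x| ^ (α * 2)) volume (-2) 1 :=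
        intervalIntegrable_abs_rpow (by linarith) _ _
      have h1' : IntervalIntegrable (fun y : ℝ => |y - 1| ^ (α * 2)) volume (-1) 2 := by
        have h := h1.comp_sub_right 1
        norm_num at h
        exact h
      have h2 : IntervalIntegrable (fun x : ℝ => |x| ^ (α * 2)) volume (-1) 2 :=
        intervalIntegrable_abs_rpow (by linarith) _ _
      have h3 := (h1'.add h2).const_mul (2 * (a + b) ^ 2)
      rw [intervalIntegrable_iff, Set.uIoc_of_le (by norm_num : (-1:ℝ) ≤ 2)] at h3
      rw [integrableOn_Icc_iff_integrableOn_Ioc]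
      exact h3
    apply Integrable.mono' hint (hmg.aestronglyMeasurable.restrict)
    filter_upwards with y
    rw [Real.norm_eq_abs, abs_of_nonneg (hg_nonneg y)]
    have e1 : ∀ x : ℝ, qCusp a b α x ^ 2 ≤ (a + b) ^ 2 * |x| ^ (α * 2) := by
      intro x
      have := hq_abs x
      calc qCusp a b α x ^ 2 = |qCusp a b α x| ^ 2 := (sq_abs _).symm
        _ ≤ ((a + b) * |x| ^ α) ^ 2 := by
            apply pow_le_pow_left₀ (abs_nonneg _) this
        _ = (a + b) ^ 2 * (|x| ^ α) ^ 2 := by ring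
        _ = (a + b) ^ 2 * |x| ^ (α * 2) := by
            rw [← Real.rpow_natCast (|x| ^ α) 2, ← Real.rpow_mul (abs_nonneg x)]
            norm_num
    have key : g y ≤ 2 * qCusp a b α (y - 1) ^ 2 + 2 * qCusp a b α y ^ 2 := by
      simp only [hg]
      nlinarith [sq_nonneg (qCusp a b α (y - 1) + qCusp a b α y)]
    calc g y ≤ 2 * qCusp a b α (y - 1) ^ 2 + 2 * qCusp a b α y ^ 2 := key
      _ ≤ 2 * ((a + b) ^ 2 * |y - 1| ^ (α * 2)) + 2 * ((a + b) ^ 2 * |y| ^ (α * 2)) := by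
          have := e1 (y - 1); have := e1 y; linarith
      _ = 2 * (a + b) ^ 2 * (|y - 1| ^ (α * 2) + |y| ^ (α * 2)) := by ring
  -- right tail
  have hright : IntegrableOn g (Set.Ioi (2 : ℝ)) := by
    have hint : IntegrableOn
        (fun y : ℝ => (a ^ 2 * α ^ 2 * 2 ^ (2 - 2 * α)) * y ^ (2 * α - 2))
        (Set.Ioi (2 : ℝ)) :=
      (integrableOn_Ioi_rpow_of_lt hexp (by norm_num)).const_mul _
    apply Integrable.mono' hint (hmg.aestronglyMeasurable.restrict)
    rw [ae_restrict_iff' measurableSet_Ioi]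
    filter_upwards with y hy
    have hy2 : (2:ℝ) < y := hy
    have hy0 : (0:ℝ) < y := by linarith
    have ht1 : (1:ℝ) ≤ y - 1 := by linarith
    rw [Real.norm_eq_abs, abs_of_nonneg (hg_nonneg y)]
    have hq1 : qCusp a b α (y - 1) = a * (y - 1) ^ α := by
      unfold qCusp; rw [if_pos (by linarith), abs_of_nonneg (by linarith)]
    have hq2 : qCusp a b α y = a * y ^ α := by
      unfold qCusp; rw [if_pos hy0.le, abs_of_nonneg hy0.le]
    have hmvt : |y ^ α - (y - 1) ^ α| ≤ |α| * (y - 1) ^ (α - 1) := by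
      have := rpow_add_one_sub_rpow_le (le_of_lt (by linarith : α < 1)) ht1
      have hy' : y - 1 + 1 = y := by ring
      rw [hy'] at this
      exact this
    have hstep : (y - 1) ^ (α - 1) ≤ y ^ (α - 1) * 2 ^ (1 - α) := by
      have h1 : (y - 1) ^ (α - 1) ≤ (y / 2) ^ (α - 1) :=
        Real.rpow_le_rpow_of_nonpos (by linarith) (by linarith) (by linarith)
      have h2 : (y / 2) ^ (α - 1) = y ^ (α - 1) * 2 ^ (1 - α) := by
        rw [div_eq_mul_inv, Real.mul_rpow hy0.le (by norm_num),
          ← Real.rpow_neg_one (2:ℝ), ← Real.rpow_mul (by norm_num)]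
        ring_nf
      linarith [h1, h2.le, h2.ge]
    have hbound : |qCusp a b α (y - 1) - qCusp a b α y| ≤
        a * |α| * (y ^ (α - 1) * 2 ^ (1 - α)) := by
      rw [hq1, hq2, ← mul_sub, abs_mul, abs_of_nonneg ha, abs_sub_comm, mul_assoc]
      apply mul_le_mul_of_nonneg_left _ ha
      calc |y ^ α - (y - 1) ^ α| ≤ |α| * (y - 1) ^ (α - 1) := hmvt
        _ ≤ |α| * (y ^ (α - 1) * 2 ^ (1 - α)) :=
            mul_le_mul_of_nonneg_left hstep (abs_nonneg α)
    calc g y = |qCusp a b α (y - 1) - qCusp a b α y| ^ 2 := by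
          simp only [hg]; rw [sq_abs]
      _ ≤ (a * |α| * (y ^ (α - 1) * 2 ^ (1 - α))) ^ 2 := by
          apply pow_le_pow_left₀ (abs_nonneg _) hbound
      _ = a ^ 2 * α ^ 2 * ((2:ℝ) ^ (1 - α)) ^ 2 * (y ^ (α - 1)) ^ 2 := by
          rw [← sq_abs α]; ring
      _ = a ^ 2 * α ^ 2 * 2 ^ (2 - 2 * α) * y ^ (2 * α - 2) := by
          rw [← Real.rpow_natCast ((2:ℝ) ^ (1 - α)) 2, ← Real.rpow_mul (by norm_num : (0:ℝ) ≤ 2),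
            ← Real.rpow_natCast (y ^ (α - 1)) 2, ← Real.rpow_mul hy0.le,
            show (1 - α) * ((2:ℕ):ℝ) = 2 - 2 * α by push_cast; ring,
            show (α - 1) * ((2:ℕ):ℝ) = 2 * α - 2 by push_cast; ring]
  -- left tail
  have hleft : IntegrableOn g (Set.Iio (-1 : ℝ)) := by
    have hint : IntegrableOn (fun y : ℝ => (b ^ 2 * α ^ 2) * (-y) ^ (2 * α - 2))
        (Set.Iio (-1 : ℝ)) := by
      have base : IntegrableOn (fun x : ℝ => x ^ (2 * α - 2)) (Set.Ioi (1 : ℝ)) :=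
        integrableOn_Ioi_rpow_of_lt hexp one_pos
      have := (Measure.measurePreserving_neg (volume : Measure ℝ)).integrableOn_comp_preimage
        (Homeomorph.neg ℝ).measurableEmbedding
        (f := fun x : ℝ => x ^ (2 * α - 2)) (s := Set.Ioi (1 : ℝ))
      rw [show (Neg.neg ⁻¹' Set.Ioi (1:ℝ)) = Set.Iio (-1 : ℝ) by
        ext x; simp [lt_neg]] at this
      exact ((this.mpr base).const_mul _)
    apply Integrable.mono' hint (hmg.aestronglyMeasurable.restrict)
    rw [ae_restrict_iff' measurableSet_Iio]
    filter_upwards with y hy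
    have hy1 : y < -1 := hy
    have ht1 : (1:ℝ) ≤ -y := by linarith
    have ht0 : (0:ℝ) < -y := by linarith
    rw [Real.norm_eq_abs, abs_of_nonneg (hg_nonneg y)]
    have hq1 : qCusp a b α (y - 1) = b * (-y + 1) ^ α := by
      unfold qCusp; rw [if_neg (by linarith), abs_of_nonpos (by linarith)]
      ring_nf
    have hq2 : qCusp a b α y = b * (-y) ^ α := by
      unfold qCusp; rw [if_neg (by linarith), abs_of_nonpos (by linarith)]
    have hmvt : |(-y + 1) ^ α - (-y) ^ α| ≤ |α| * (-y) ^ (α - 1) := by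
      simpa using rpow_add_one_sub_rpow_le (le_of_lt (by linarith : α < 1)) ht1
    have hbound : |qCusp a b α (y - 1) - qCusp a b α y| ≤ b * (|α| * (-y) ^ (α - 1)) := by
      rw [hq1, hq2, ← mul_sub, abs_mul, abs_of_nonneg hb]
      exact mul_le_mul_of_nonneg_left hmvt hb
    calc g y = |qCusp a b α (y - 1) - qCusp a b α y| ^ 2 := by
          simp only [hg]; rw [sq_abs]
      _ ≤ (b * (|α| * (-y) ^ (α - 1))) ^ 2 := by
          apply pow_le_pow_left₀ (abs_nonneg _) hbound
      _ = b ^ 2 * α ^ 2 * ((-y) ^ (α - 1)) ^ 2 := by rw [← sq_abs α]; ring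
      _ = b ^ 2 * α ^ 2 * (-y) ^ (2 * α - 2) := by
          rw [← Real.rpow_natCast ((-y) ^ (α - 1)) 2, ← Real.rpow_mul ht0.le,
            show (α - 1) * ((2:ℕ):ℝ) = 2 * α - 2 by push_cast; ring]
  -- combine
  have hunion : Set.Iio (-1 : ℝ) ∪ (Set.Icc (-1 : ℝ) 2 ∪ Set.Ioi (2 : ℝ)) = Set.univ := by
    ext x
    simp only [Set.mem_union, Set.mem_Iio, Set.mem_Icc, Set.mem_Ioi, Set.mem_univ, iff_true]
    by_cases h1 : x < -1
    · exact Or.inl h1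
    · by_cases h2 : x ≤ 2
      · exact Or.inr (Or.inl ⟨le_of_not_gt h1, h2⟩)
      · exact Or.inr (Or.inr (lt_of_not_ge h2))
  rw [← integrableOn_univ, ← hunion]
  exact hleft.union (hmid.union hright)
end

section
/- Let W be a two-sided standard Brownian motion and for α ∈ (-1/2, 1/2) let Y_u := Γ_α^{-1} ∫_ℝ (q_α(y-u) - q_α(y)) dW_y be the Wiener integral of the deterministic kernel. Then for all u, s ∈ ℝ, E|Y_u - Y_s|² = |u-s|^{2H} with H = α + 1/2; consequently Y is a standard fractional Brownian motion with Hurst parameter H. -/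
open Real MeasureTheory

lemma qCusp_mul {a b α : ℝ} {h : ℝ} (hh : 0 < h) (x : ℝ) :
    qCusp a b α (h * x) = h ^ α * qCusp a b α x := by
  unfold qCusp
  have h1 : (0 ≤ h * x) ↔ (0 ≤ x) := by
    constructor
    · intro hx
      by_contra hc
      push_neg at hc
      nlinarith
    · intro hx; positivity
  rw [abs_mul, abs_of_pos hh, Real.mul_rpow (le_of_lt hh) (abs_nonneg x)]
  simp only [h1]
  ring

/-- Theorem 1: the Wiener integral of the cusp kernel, normalized by `Γ_α`, has
fBm increments: `E|Y_u - Y_s|² = |u-s|^{2H}` with `H = α + 1/2`.  The Wiener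
integral is abstracted as a linear map `J` from kernels to random variables
satisfying the Itô isometry on square-integrable kernels. -/
theorem cusp_representation_fBm
    {Ω : Type*} [MeasureSpace Ω] (μ : Measure Ω) [IsProbabilityMeasure μ]
    (a b α : ℝ) (ha : 0 ≤ a) (hb : 0 ≤ b) (hab : ¬ (a = 0 ∧ b = 0))
    (hα : α ∈ Set.Ioo (-(1/2) : ℝ) (1/2)) (H : ℝ) (hH : H = α + 1/2)
    (Γ : ℝ) (hΓpos : 0 < Γ)
    (hΓ : Γ ^ 2 = ∫ y : ℝ, (qCusp a b α (y - 1) - qCusp a b α y) ^ 2)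
    (J : (ℝ → ℝ) → Ω → ℝ)
    (hJlin : ∀ f g : ℝ → ℝ, ∀ ω : Ω, J (f - g) ω = J f ω - J g ω)
    (hJiso : ∀ f : ℝ → ℝ, Integrable (fun y => f y ^ 2) →
      ∫ ω, (J f ω) ^ 2 ∂μ = ∫ y : ℝ, f y ^ 2)
    (Y : ℝ → Ω → ℝ)
    (hY : ∀ u ω, Y u ω = Γ⁻¹ * J (fun y => qCusp a b α (y - u) - qCusp a b α y) ω) :
    ∀ u s : ℝ, ∫ ω, (Y u ω - Y s ω) ^ 2 ∂μ = |u - s| ^ (2 * H) := by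
  have hHpos : 0 < H := by rw [hH]; have := hα.1; linarith
  set g : ℝ → ℝ := fun z => (qCusp a b α (z - 1) - qCusp a b α z) ^ 2 with hg
  have hbase_int : Integrable g := by
    by_contra hc
    rw [show (∫ y : ℝ, (qCusp a b α (y - 1) - qCusp a b α y) ^ 2) = ∫ y : ℝ, g y from rfl,
      integral_undef hc] at hΓ
    nlinarith
  -- scaling lemma
  have key : ∀ h : ℝ, 0 < h →
      Integrable (fun y => (qCusp a b α (y - h) - qCusp a b α y) ^ 2) ∧
      (∫ y : ℝ, (qCusp a b α (y - h) - qCusp a b α y) ^ 2) = h ^ (2 * H) * Γ ^ 2 := by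
    intro h hh
    have heq : (fun y => (qCusp a b α (y - h) - qCusp a b α y) ^ 2)
        = fun y => (h ^ α) ^ 2 * g (h⁻¹ * y) := by
      funext y
      have e1 : qCusp a b α (y - h) = h ^ α * qCusp a b α (h⁻¹ * y - 1) := by
        rw [← qCusp_mul hh]; congr 1; field_simp
      have e2 : qCusp a b α y = h ^ α * qCusp a b α (h⁻¹ * y) := by
        rw [← qCusp_mul hh]; congr 1; field_simp
      rw [e1, e2, hg]
      ring
    have hint2 : Integrable (fun y => g (h⁻¹ * y)) :=
      hbase_int.comp_mul_left' (inv_ne_zero hh.ne')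
    constructor
    · rw [heq]; exact hint2.const_mul _
    · have hsm : (∫ y : ℝ, g (h⁻¹ * y)) = h * ∫ z : ℝ, g z := by
        rw [Measure.integral_comp_mul_left g h⁻¹, inv_inv, abs_of_pos hh, smul_eq_mul]
      have hpow : (h ^ α) ^ 2 * h = h ^ (2 * H) := by
        have : h ^ (2 * H) = h ^ (α + α) * h := by
          rw [hH, show 2 * (α + 1/2) = (α + α) + 1 by ring, Real.rpow_add hh, Real.rpow_one]
        rw [this, sq, ← Real.rpow_add hh]
      calc (∫ y : ℝ, (qCusp a b α (y - h) - qCusp a b α y) ^ 2)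
          = ∫ y : ℝ, (h ^ α) ^ 2 * g (h⁻¹ * y) := by rw [heq]
        _ = (h ^ α) ^ 2 * ∫ y : ℝ, g (h⁻¹ * y) := integral_const_mul _ _
        _ = (h ^ α) ^ 2 * (h * ∫ z : ℝ, g z) := by rw [hsm]
        _ = ((h ^ α) ^ 2 * h) * Γ ^ 2 := by rw [hΓ]; ring
        _ = h ^ (2 * H) * Γ ^ 2 := by rw [hpow]
  intro u s
  rcases eq_or_ne u s with rfl | hne
  · have : |u - u| ^ (2 * H) = 0 := by
      rw [sub_self, abs_zero, Real.zero_rpow (by positivity)]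
    rw [this]
    simp
  -- general case
  have hYdiff : ∀ ω, Y u ω - Y s ω
      = Γ⁻¹ * J (fun y => qCusp a b α (y - u) - qCusp a b α (y - s)) ω := by
    intro ω
    rw [hY, hY, ← mul_sub, ← hJlin]
    congr 2
    funext y
    simp only [Pi.sub_apply]
    ring
  have hkernel_int : Integrable (fun y => (qCusp a b α (y - u) - qCusp a b α (y - s)) ^ 2) ∧
      (∫ y : ℝ, (qCusp a b α (y - u) - qCusp a b α (y - s)) ^ 2) = |u - s| ^ (2 * H) * Γ ^ 2 := by
    rcases lt_or_gt_of_ne hne with hlt | hgt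
    · -- u < s
      have hd : 0 < s - u := by linarith
      have habs : |u - s| = s - u := by rw [abs_sub_comm, abs_of_pos hd]
      have heq : (fun y => (qCusp a b α (y - u) - qCusp a b α (y - s)) ^ 2)
          = fun y => (fun z => (qCusp a b α (z - (s - u)) - qCusp a b α z) ^ 2) (y - u) := by
        funext y
        simp only
        rw [show y - u - (s - u) = y - s by ring]
        ring
      rw [heq, habs]
      refine ⟨(key _ hd).1.comp_sub_right u, ?_⟩
      rw [integral_sub_right_eq_self
        (fun z => (qCusp a b α (z - (s - u)) - qCusp a b α z) ^ 2) u]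
      exact (key _ hd).2
    · -- u > s
      have hd : 0 < u - s := by linarith
      have habs : |u - s| = u - s := abs_of_pos hd
      have heq : (fun y => (qCusp a b α (y - u) - qCusp a b α (y - s)) ^ 2)
          = fun y => (fun z => (qCusp a b α (z - (u - s)) - qCusp a b α z) ^ 2) (y - s) := by
        funext y
        simp only
        rw [show y - s - (u - s) = y - u by ring]
      rw [heq, habs]
      refine ⟨(key _ hd).1.comp_sub_right s, ?_⟩
      rw [integral_sub_right_eq_self
        (fun z => (qCusp a b α (z - (u - s)) - qCusp a b α z) ^ 2) s]
      exact (key _ hd).2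
  have hΓ2 : (Γ : ℝ) ^ 2 ≠ 0 := by positivity
  calc ∫ ω, (Y u ω - Y s ω) ^ 2 ∂μ
      = ∫ ω, Γ⁻¹ ^ 2 * (J (fun y => qCusp a b α (y - u) - qCusp a b α (y - s)) ω) ^ 2 ∂μ := by
        apply integral_congr_ae
        filter_upwards with ω
        rw [hYdiff ω]; ring
    _ = Γ⁻¹ ^ 2 * ∫ ω, (J (fun y => qCusp a b α (y - u) - qCusp a b α (y - s)) ω) ^ 2 ∂μ :=
        integral_const_mul _ _
    _ = Γ⁻¹ ^ 2 * ∫ y : ℝ, (qCusp a b α (y - u) - qCusp a b α (y - s)) ^ 2 := by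
        rw [hJiso _ hkernel_int.1]
    _ = Γ⁻¹ ^ 2 * (|u - s| ^ (2 * H) * Γ ^ 2) := by rw [hkernel_int.2]
    _ = |u - s| ^ (2 * H) := by field_simp
end

section
/- Let H = α + 1/2 with α ∈ (-1/2, 1/2) and Γ_α² = ∫_ℝ (q_α(x-1) - q_α(x))² dx. For θ ∈ (0, T) and φ_ε > 0 with φ_ε → 0, define B_ε(u) = ε^{-2} ∫_0^T (q_α(v − θ − φ_ε u) − q_α(v − θ))² dv where ε^{-2} φ_ε^{2H} Γ_α² = 1. Then for every fixed u ∈ ℝ, B_ε(u) → |u|^{2H} as ε → 0. -/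
open Real MeasureTheory Filter

noncomputable def gdiff (a b α u t : ℝ) : ℝ := (qCusp a b α (t - u) - qCusp a b α t) ^ 2

lemma qCusp_const_mul {a b α c : ℝ} (hc : 0 < c) (x : ℝ) :
    qCusp a b α (c * x) = c ^ α * qCusp a b α x := by
  unfold qCusp
  have h1 : |c * x| ^ α = c ^ α * |x| ^ α := by
    rw [abs_mul, abs_of_pos hc, Real.mul_rpow hc.le (abs_nonneg x)]
  have h2 : (0 ≤ c * x) ↔ (0 ≤ x) := mul_nonneg_iff_of_pos_left hc
  rw [h1]
  rcases le_or_gt 0 x with h | h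
  · rw [if_pos (h2.2 h), if_pos h]; ring
  · rw [if_neg (fun hcx => absurd (h2.1 hcx) (not_le.2 h)), if_neg (not_le.2 h)]; ring

lemma qCusp_neg {a b α x : ℝ} (hx : x ≠ 0) : qCusp a b α (-x) = qCusp b a α x := by
  unfold qCusp
  rw [abs_neg]
  rcases hx.lt_or_gt with h | h
  · rw [if_pos (neg_nonneg.2 h.le), if_neg (not_le.2 h)]
  · rw [if_neg (by simpa using h), if_pos h.le]

lemma gdiff_scale {a b α c : ℝ} (hc : 0 < c) (u t : ℝ) :
    gdiff a b α (c * u) (c * t) = (c ^ α) ^ 2 * gdiff a b α u t := by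
  unfold gdiff
  rw [show c * t - c * u = c * (t - u) by ring, qCusp_const_mul hc, qCusp_const_mul hc]
  ring

lemma gdiff_swap_ae (a b α : ℝ) :
    (fun x => gdiff b a α 1 x) =ᵐ[volume] fun x => gdiff a b α 1 (1 - x) := by
  have h : ∀ᵐ x : ℝ, x ∉ ({0, 1} : Set ℝ) :=
    (Set.Finite.countable (by simp)).ae_notMem _
  filter_upwards [h] with x hx
  simp only [Set.mem_insert_iff, Set.mem_singleton_iff, not_or] at hx
  unfold gdiff
  have h1 : qCusp b a α (x - 1) = qCusp a b α (1 - x) := by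
    rw [show (1 : ℝ) - x = -(x - 1) by ring, qCusp_neg (sub_ne_zero.2 hx.2)]
  have h2 : qCusp b a α x = qCusp a b α (-x) := (qCusp_neg hx.1).symm
  rw [show (1 : ℝ) - x - 1 = -x by ring, h1, h2]
  ring

lemma integral_gdiff_swap (a b α : ℝ) :
    (∫ x : ℝ, gdiff b a α 1 x) = ∫ x : ℝ, gdiff a b α 1 x := by
  rw [integral_congr_ae (gdiff_swap_ae a b α), integral_sub_left_eq_self (gdiff a b α 1) volume 1]

lemma integrable_gdiff_swap {a b α : ℝ} (h : Integrable (gdiff a b α 1)) :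
    Integrable (gdiff b a α 1) :=
  (Integrable.congr (h.comp_sub_left 1) (gdiff_swap_ae a b α).symm)

/-- Main integral computation over ℝ. -/
lemma gdiff_integral {a b α : ℝ} (hα : -(1/2 : ℝ) < α) (h1 : Integrable (gdiff a b α 1)) (u : ℝ) :
    Integrable (gdiff a b α u) ∧
      (∫ t : ℝ, gdiff a b α u t) = |u| ^ (2 * α + 1) * ∫ x : ℝ, gdiff a b α 1 x := by
  rcases eq_or_ne u 0 with rfl | hu
  · have hz : gdiff a b α 0 = fun _ => (0 : ℝ) := by
      funext t; unfold gdiff; rw [sub_zero]; ring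
    rw [hz]
    constructor
    · exact integrable_zero _ _ _
    · rw [abs_zero, Real.zero_rpow (by linarith : (2 * α + 1 : ℝ) ≠ 0)]
      simp
  rcases hu.lt_or_gt with hneg | hpos
  · -- u < 0
    set c : ℝ := -u with hc
    have hcpos : 0 < c := by simpa [hc] using hneg
    have hswap : Integrable (gdiff b a α 1) := integrable_gdiff_swap h1
    have key : (fun t => gdiff a b α u t)
        =ᵐ[volume] fun t => (c ^ α) ^ 2 * gdiff b a α 1 (c⁻¹ * -t) := by
      have h : ∀ᵐ t : ℝ, t ∉ ({0, u} : Set ℝ) :=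
        (Set.Finite.countable (by simp)).ae_notMem _
      filter_upwards [h] with t ht
      simp only [Set.mem_insert_iff, Set.mem_singleton_iff, not_or] at ht
      have e1 : gdiff b a α (c * 1) (c * (c⁻¹ * -t)) = (c ^ α) ^ 2 * gdiff b a α 1 (c⁻¹ * -t) :=
        gdiff_scale hcpos 1 _
      rw [mul_one, mul_inv_cancel_left₀ hcpos.ne'] at e1
      rw [← e1]
      unfold gdiff
      have h2 : qCusp b a α (-t - c) = qCusp a b α (t - u) := by
        rw [show -t - c = -(t - u) by rw [hc]; ring]
        exact qCusp_neg (sub_ne_zero.2 ht.2)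
      have h3 : qCusp b a α (-t) = qCusp a b α t := qCusp_neg ht.1
      rw [h2, h3]
    have hint2 : Integrable (fun t : ℝ => (c ^ α) ^ 2 * gdiff b a α 1 (c⁻¹ * -t)) := by
      have := (hswap.comp_mul_left' (inv_ne_zero hcpos.ne')).comp_neg
      exact this.const_mul _
    have hI : Integrable (gdiff a b α u) := hint2.congr key.symm
    refine ⟨hI, ?_⟩
    rw [integral_congr_ae key, integral_const_mul]
    have e2 : (∫ t : ℝ, gdiff b a α 1 (c⁻¹ * -t)) = ∫ t : ℝ, gdiff b a α 1 (c⁻¹ * t) :=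
      integral_neg_eq_self (fun t => gdiff b a α 1 (c⁻¹ * t)) volume
    rw [e2, Measure.integral_comp_inv_mul_left (gdiff b a α 1) c, integral_gdiff_swap a b α]
    rw [abs_of_pos hcpos, smul_eq_mul]
    have huc : |u| = c := by rw [hc, abs_of_neg hneg]
    have hsc : (c ^ α) ^ 2 * c = c ^ (2 * α + 1) := by
      rw [← Real.rpow_natCast (c ^ α) 2, ← Real.rpow_mul hcpos.le, Real.rpow_add hcpos,
        Real.rpow_one]
      rw [show (α * ((2:ℕ):ℝ)) = 2 * α by push_cast; ring]
    rw [huc, ← hsc]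
    ring
  · -- u > 0
    have key : (fun t => gdiff a b α u t)
        = fun t => (u ^ α) ^ 2 * gdiff a b α 1 (u⁻¹ * t) := by
      funext t
      have e1 : gdiff a b α (u * 1) (u * (u⁻¹ * t)) = (u ^ α) ^ 2 * gdiff a b α 1 (u⁻¹ * t) :=
        gdiff_scale hpos 1 _
      rw [mul_one, mul_inv_cancel_left₀ hpos.ne'] at e1
      exact e1.symm ▸ e1
    have hint2 : Integrable (fun t : ℝ => (u ^ α) ^ 2 * gdiff a b α 1 (u⁻¹ * t)) :=
      (h1.comp_mul_left' (inv_ne_zero hpos.ne')).const_mul _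
    have hI : Integrable (gdiff a b α u) :=
      hint2.congr (Filter.Eventually.of_forall fun t => (congrFun key t).symm)
    refine ⟨hI, ?_⟩
    rw [key, integral_const_mul, Measure.integral_comp_inv_mul_left (gdiff a b α 1) u]
    rw [abs_of_pos hpos, smul_eq_mul]
    have hsc : (u ^ α) ^ 2 * u = u ^ (2 * α + 1) := by
      rw [← Real.rpow_natCast (u ^ α) 2, ← Real.rpow_mul hpos.le, Real.rpow_add hpos,
        Real.rpow_one]
      rw [show (α * ((2:ℕ):ℝ)) = 2 * α by push_cast; ring]
    rw [← hsc]
    ring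

theorem cusp_B_limit (a b α : ℝ) (ha : 0 ≤ a) (hb : 0 ≤ b)
    (hab : ¬ (a = 0 ∧ b = 0)) (hα : α ∈ Set.Ioo (-(1/2) : ℝ) (1/2))
    (H : ℝ) (hH : H = α + 1/2)
    (Γ : ℝ) (hΓpos : 0 < Γ)
    (hΓ : Γ ^ 2 = ∫ x : ℝ, (qCusp a b α (x - 1) - qCusp a b α x) ^ 2)
    (θ T : ℝ) (hθ : 0 < θ) (hθT : θ < T)
    (φ : ℝ → ℝ) (hφ : ∀ ε : ℝ, 0 < ε → φ ε = (ε / Γ) ^ (1 / H))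
    (u : ℝ) :
    Tendsto (fun ε : ℝ =>
        ε ^ (-2 : ℝ) * ∫ v in (0 : ℝ)..T,
          (qCusp a b α (v - θ - φ ε * u) - qCusp a b α (v - θ)) ^ 2)
      (nhdsWithin 0 (Set.Ioi 0)) (nhds (|u| ^ (2 * H))) := by
  have hα1 : -(1/2 : ℝ) < α := hα.1
  have hα2 : α < 1/2 := hα.2
  have hHpos : 0 < H := by rw [hH]; linarith
  have hΓsq : (0 : ℝ) < Γ ^ 2 := by positivity
  have hΓ' : Γ ^ 2 = ∫ x : ℝ, gdiff a b α 1 x := hΓ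
  have hg1 : Integrable (gdiff a b α 1) := by
    by_contra hcon
    rw [integral_undef hcon] at hΓ'
    exact hΓsq.ne' hΓ'
  obtain ⟨hIu, hvalu⟩ := gdiff_integral hα1 hg1 u
  have hφpos : ∀ ε ∈ Set.Ioi (0 : ℝ), 0 < φ ε := fun ε hε => by
    rw [hφ ε hε]
    exact Real.rpow_pos_of_pos (div_pos hε hΓpos) _
  -- φ tends to 0 from the right
  have hφ0 : Tendsto φ (nhdsWithin 0 (Set.Ioi 0)) (nhdsWithin 0 (Set.Ioi 0)) := by
    have h0 : ContinuousAt (fun x : ℝ => x ^ (1/H)) 0 :=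
      Real.continuousAt_rpow_const 0 (1/H) (Or.inr (by positivity))
    have h1 : Tendsto (fun ε : ℝ => ε / Γ) (nhdsWithin 0 (Set.Ioi 0)) (nhds 0) := by
      have h2 := (continuous_id.div_const Γ).tendsto 0
      simp only [id, zero_div] at h2
      exact h2.mono_left nhdsWithin_le_nhds
    have hc : Tendsto (fun ε : ℝ => (ε / Γ) ^ (1/H)) (nhdsWithin 0 (Set.Ioi 0)) (nhds 0) := by
      have := h0.tendsto.comp h1
      rwa [Real.zero_rpow (by positivity : (1/H : ℝ) ≠ 0)] at this
    have hc2 : Tendsto φ (nhdsWithin 0 (Set.Ioi 0)) (nhds 0) := by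
      refine hc.congr' ?_
      filter_upwards [self_mem_nhdsWithin] with ε hε
      exact (hφ ε hε).symm
    rw [tendsto_nhdsWithin_iff]
    refine ⟨hc2, ?_⟩
    filter_upwards [self_mem_nhdsWithin] with ε hε
    exact hφpos ε hε
  have hinv : Tendsto (fun ε => (φ ε)⁻¹) (nhdsWithin 0 (Set.Ioi 0)) atTop :=
    tendsto_inv_nhdsGT_zero.comp hφ0
  have hB : Tendsto (fun ε => (T - θ) / φ ε) (nhdsWithin 0 (Set.Ioi 0)) atTop := by
    simp only [div_eq_mul_inv]
    exact hinv.const_mul_atTop (by linarith)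
  have hA : Tendsto (fun ε => -θ / φ ε) (nhdsWithin 0 (Set.Ioi 0)) atBot := by
    have h3 : Tendsto (fun ε => θ * (φ ε)⁻¹) (nhdsWithin 0 (Set.Ioi 0)) atTop :=
      hinv.const_mul_atTop hθ
    have h4 := tendsto_neg_atTop_atBot.comp h3
    refine h4.congr fun ε => ?_
    simp [div_eq_mul_inv]
  have hlim : Tendsto
      (fun ε => (Γ ^ 2)⁻¹ * ∫ t in (-θ / φ ε)..((T - θ) / φ ε), gdiff a b α u t)
      (nhdsWithin 0 (Set.Ioi 0)) (nhds ((Γ ^ 2)⁻¹ * ∫ t : ℝ, gdiff a b α u t)) :=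
    (intervalIntegral_tendsto_integral hIu hA hB).const_mul _
  have hval : (Γ ^ 2)⁻¹ * (∫ t : ℝ, gdiff a b α u t) = |u| ^ (2 * H) := by
    rw [hvalu, ← hΓ', show (2 * H : ℝ) = 2 * α + 1 by rw [hH]; ring]
    field_simp
  rw [hval] at hlim
  refine hlim.congr' ?_
  filter_upwards [self_mem_nhdsWithin] with ε hε
  have hεpos : (0 : ℝ) < ε := hε
  set p := φ ε with hpdef
  have hp : 0 < p := hφpos ε hε
  -- rewrite the interval integral
  have e1 : (∫ v in (0 : ℝ)..T, (qCusp a b α (v - θ - p * u) - qCusp a b α (v - θ)) ^ 2)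
      = ∫ v in (0 : ℝ)..T, gdiff a b α (p * u) (v - θ) := rfl
  have e2 : (∫ v in (0 : ℝ)..T, gdiff a b α (p * u) (v - θ))
      = ∫ t in ((0 : ℝ) - θ)..(T - θ), gdiff a b α (p * u) t :=
    intervalIntegral.integral_comp_sub_right _ θ
  have e3 : (∫ x in (-θ / p)..((T - θ) / p), gdiff a b α (p * u) (p * x))
      = p⁻¹ • ∫ x in (p * (-θ / p))..(p * ((T - θ) / p)), gdiff a b α (p * u) x :=
    intervalIntegral.integral_comp_mul_left _ hp.ne'
  rw [show p * (-θ / p) = (0 : ℝ) - θ by field_simp; ring,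
    show p * ((T - θ) / p) = T - θ by field_simp] at e3
  have e4 : (∫ x in (-θ / p)..((T - θ) / p), gdiff a b α (p * u) (p * x))
      = (p ^ α) ^ 2 * ∫ x in (-θ / p)..((T - θ) / p), gdiff a b α u x := by
    rw [← intervalIntegral.integral_const_mul]
    refine intervalIntegral.integral_congr fun x _ => ?_
    exact gdiff_scale hp u x
  have e5 : (∫ t in ((0 : ℝ) - θ)..(T - θ), gdiff a b α (p * u) t)
      = p * ((p ^ α) ^ 2 * ∫ x in (-θ / p)..((T - θ) / p), gdiff a b α u x) := by
    rw [← e4, e3, smul_eq_mul, ← mul_assoc, mul_inv_cancel₀ hp.ne', one_mul]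
  -- scalar identity
  have hscal : ε ^ (-2 : ℝ) * (p * (p ^ α) ^ 2) = (Γ ^ 2)⁻¹ := by
    have hxp : (0 : ℝ) < ε / Γ := div_pos hεpos hΓpos
    have hpp : p * (p ^ α) ^ 2 = p ^ (2 * α + 1) := by
      rw [← Real.rpow_natCast (p ^ α) 2, ← Real.rpow_mul hp.le, Real.rpow_add hp,
        Real.rpow_one, show (α * ((2 : ℕ) : ℝ)) = 2 * α by push_cast; ring]
      ring
    have hexp : (1 / H * (2 * α + 1) : ℝ) = 2 := by
      have h2 : H ≠ 0 := hHpos.ne'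
      field_simp
      rw [hH]; ring
    have hpe : p ^ (2 * α + 1 : ℝ) = (ε / Γ) ^ (2 : ℝ) := by
      rw [hpdef, hφ ε hεpos, ← Real.rpow_mul hxp.le, hexp]
    have hde : (ε / Γ) ^ (2 : ℝ) = ε ^ 2 / Γ ^ 2 := by
      rw [show (2 : ℝ) = ((2 : ℕ) : ℝ) by norm_num, Real.rpow_natCast]
      exact div_pow ε Γ 2
    have hen : ε ^ (-2 : ℝ) = (ε ^ 2)⁻¹ := by
      rw [show (-2 : ℝ) = -((2 : ℕ) : ℝ) by norm_num, Real.rpow_neg hεpos.le,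
        Real.rpow_natCast]
    rw [hpp, hpe, hde, hen]
    field_simp
  rw [e1, e2, e5, ← hscal]
  ring
end

section
/- Let f : ℝ → ℝ be given by f(y) = q_α(y − u) − q_α(y) for fixed u ∈ ℝ, where q_α(x) = (a·1{x≥0} + b·1{x<0})|x|^α with α ∈ (-1/2, 0). Then f ∈ L²(ℝ) even though q_α itself is unbounded near its singularity; in particular ∫_ℝ f(y)² dy = |u|^{2α+1} Γ_α² < ∞. -/
/-!
Substituting `y = u x` and using the homogeneity `q(c x) = c ^ α q(x)` for `c > 0` produces the
factor `u ^ (2α) · u`; a negative `u` reduces to `-u` by a translation. For `u = 1` the squared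
increment is integrable: on `(0, 1)` it is dominated by `x ^ (2α)` and `(1 - x) ^ (2α)`, integrable
since `2α > -1`, and on the two tails it is `a²` resp. `b²` times a translate or reflection of
`h(t) = (t ^ α - (t + 1) ^ α)²`, which is at most `t ^ (2α)` near `0` and, by the mean value
theorem, at most `α² t ^ (2α - 2)` near `∞`.
-/

open Real MeasureTheory Set

lemma Real.rpow_pow_two {x : ℝ} (hx : 0 ≤ x) (y : ℝ) : (x ^ y) ^ 2 = x ^ (2 * y) := by
  simpa [mul_comm] using (rpow_mul_natCast hx y 2).symm

lemma Real.rpow_sub_rpow_le_of_nonpos {α s t : ℝ} (hα : α ≤ 0) (hs : 0 < s) (hst : s ≤ t) :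
    s ^ α - t ^ α ≤ -α * s ^ (α - 1) * (t - s) := by
  rcases hst.eq_or_lt with rfl | hst
  · simp
  obtain ⟨c, ⟨hsc, -⟩, hc⟩ := exists_hasDerivAt_eq_slope (· ^ α) (fun x => α * x ^ (α - 1)) hst
    (continuousOn_id.rpow_const fun x hx => Or.inl (hs.trans_le hx.1).ne')
    fun x hx => hasDerivAt_rpow_const (Or.inl (hs.trans hx.1).ne')
  have hcs : c ^ (α - 1) ≤ s ^ (α - 1) := rpow_le_rpow_of_nonpos hs hsc.le (by linarith)
  rw [eq_div_iff (sub_pos.2 hst).ne'] at hc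
  nlinarith [mul_le_mul_of_nonneg_left hcs (neg_nonneg.2 hα), sub_pos.2 hst]

lemma integrableOn_Ioi_sq_rpow_sub_rpow_add_one {α : ℝ} (h₁ : -1 < 2 * α) (h₂ : α ≤ 0) :
    IntegrableOn (fun t : ℝ => (t ^ α - (t + 1) ^ α) ^ 2) (Ioi 0) := by
  have hmeas : AEStronglyMeasurable (fun t : ℝ => (t ^ α - (t + 1) ^ α) ^ 2) := by fun_prop
  have hbounds : ∀ t : ℝ, 0 < t → 0 ≤ t ^ α - (t + 1) ^ α ∧ t ^ α - (t + 1) ^ α ≤ t ^ α ∧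
      t ^ α - (t + 1) ^ α ≤ -α * t ^ (α - 1) := fun t ht =>
    ⟨sub_nonneg.2 (rpow_le_rpow_of_nonpos ht (by linarith) h₂),
      sub_le_self _ (rpow_nonneg (by linarith) _),
      by simpa using rpow_sub_rpow_le_of_nonpos h₂ ht (le_add_of_nonneg_right zero_le_one)⟩
  rw [← Ioc_union_Ioi_eq_Ioi zero_le_one, integrableOn_union]
  constructor
  · refine Integrable.mono' (intervalIntegral.intervalIntegrable_rpow' h₁).1 hmeas.restrict ?_
    filter_upwards [ae_restrict_mem measurableSet_Ioc] with t ht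
    obtain ⟨h0, hle, -⟩ := hbounds t ht.1
    rw [norm_pow, norm_of_nonneg h0, ← rpow_pow_two ht.1.le]
    exact pow_le_pow_left₀ h0 hle 2
  · refine Integrable.mono' ((integrableOn_Ioi_rpow_of_lt (by linarith : 2 * (α - 1) < -1)
      zero_lt_one).const_mul (α ^ 2)) hmeas.restrict ?_
    filter_upwards [ae_restrict_mem measurableSet_Ioi] with t ht
    obtain ⟨h0, -, hle⟩ := hbounds t (zero_lt_one.trans ht)
    rw [norm_pow, norm_of_nonneg h0, ← rpow_pow_two (zero_le_one.trans ht.le)]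
    exact (pow_le_pow_left₀ h0 hle 2).trans_eq (by ring)

lemma integrableOn_Ioo_sq_mul_rpow_sub_mul_rpow {α : ℝ} (h₁ : -1 < 2 * α) (a b : ℝ) :
    IntegrableOn (fun x : ℝ => (b * (1 - x) ^ α - a * x ^ α) ^ 2) (Ioo 0 1) := by
  have hx : IntegrableOn (fun x : ℝ => x ^ (2 * α)) (Ioo 0 1) :=
    (intervalIntegral.intervalIntegrable_rpow' h₁).1.mono_set Ioo_subset_Ioc_self
  have h1x : IntegrableOn (fun x : ℝ => (1 - x) ^ (2 * α)) (Ioo 0 1) := by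
    have := (intervalIntegral.intervalIntegrable_rpow' h₁ (a := 1) (b := 0)).comp_sub_left 1
    simp only [sub_self, sub_zero] at this
    exact this.1.mono_set Ioo_subset_Ioc_self
  refine Integrable.mono' ((h1x.const_mul (2 * b ^ 2)).add (hx.const_mul (2 * a ^ 2)))
    (by fun_prop) ?_
  filter_upwards [ae_restrict_mem measurableSet_Ioo] with x hx
  rw [Pi.add_apply, norm_pow, norm_eq_abs, sq_abs, ← rpow_pow_two (by linarith [hx.2]),
    ← rpow_pow_two hx.1.le]
  nlinarith [sq_nonneg (b * (1 - x) ^ α + a * x ^ α)]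

noncomputable def qCuspIncrementSq (a b α u y : ℝ) : ℝ :=
  (qCusp a b α (y - u) - qCusp a b α y) ^ 2

section qCusp

variable {a b α : ℝ}

lemma qCusp_mul_of_pos {c : ℝ} (hc : 0 < c) (x : ℝ) :
    qCusp a b α (c * x) = c ^ α * qCusp a b α x := by
  simp only [qCusp, mul_nonneg_iff_of_pos_left hc, abs_mul, abs_of_pos hc,
    mul_rpow hc.le (abs_nonneg x)]
  ring

lemma qCusp_of_pos {x : ℝ} (hx : 0 < x) : qCusp a b α x = a * x ^ α := by
  rw [qCusp, if_pos hx.le, abs_of_pos hx]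

lemma qCusp_of_neg {x : ℝ} (hx : x < 0) : qCusp a b α x = b * (-x) ^ α := by
  rw [qCusp, if_neg hx.not_ge, abs_of_neg hx]

lemma qCuspIncrementSq_zero : qCuspIncrementSq a b α 0 = 0 := by
  ext y
  simp [qCuspIncrementSq]

lemma qCuspIncrementSq_neg (u : ℝ) :
    qCuspIncrementSq a b α (-u) = fun y => qCuspIncrementSq a b α u (y + u) := by
  ext y
  simp only [qCuspIncrementSq, sub_neg_eq_add, add_sub_cancel_right]
  ring

lemma qCuspIncrementSq_of_pos {u : ℝ} (hu : 0 < u) :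
    qCuspIncrementSq a b α u = fun y => u ^ (2 * α) * qCuspIncrementSq a b α 1 (y / u) := by
  ext y
  have hscale (z : ℝ) : qCusp a b α (u * z) = u ^ α * qCusp a b α z := qCusp_mul_of_pos hu z
  rw [qCuspIncrementSq, qCuspIncrementSq, ← rpow_pow_two hu.le, ← mul_pow, mul_sub, ← hscale,
    ← hscale, mul_sub, mul_one, mul_div_cancel₀ y hu.ne']

lemma integrable_qCuspIncrementSq_one (h₁ : -1 < 2 * α) (h₂ : α ≤ 0) :
    Integrable (qCuspIncrementSq a b α 1) := by
  have hprofile := integrableOn_Ioi_sq_rpow_sub_rpow_add_one h₁ h₂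
  have hleft : IntegrableOn (qCuspIncrementSq a b α 1) (Iio 0) := by
    refine (integrableOn_congr_fun (fun x (hx : x < 0) => ?_) measurableSet_Iio).2
      ((neg_zero (G := ℝ) ▸ hprofile).comp_neg_Iio.const_mul (b ^ 2))
    rw [qCuspIncrementSq, qCusp_of_neg (by linarith), qCusp_of_neg hx]
    ring_nf
  have hmid : IntegrableOn (qCuspIncrementSq a b α 1) (Icc 0 1) := by
    rw [integrableOn_Icc_iff_integrableOn_Ioo]
    refine (integrableOn_congr_fun (fun x (hx : x ∈ Ioo 0 1) => ?_) measurableSet_Ioo).2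
      (integrableOn_Ioo_sq_mul_rpow_sub_mul_rpow h₁ a b)
    rw [qCuspIncrementSq, qCusp_of_neg (by linarith [hx.2]), qCusp_of_pos hx.1, neg_sub]
  have hright : IntegrableOn (qCuspIncrementSq a b α 1) (Ioi 1) := by
    have hshift := ((measurePreserving_sub_right volume (1 : ℝ)).integrableOn_comp_preimage
      (measurableEmbedding_subRight 1)).2 (hprofile.const_mul (a ^ 2))
    rw [preimage_sub_const_Ioi, zero_add] at hshift
    refine (integrableOn_congr_fun (fun x (hx : 1 < x) => ?_) measurableSet_Ioi).2 hshift
    rw [qCuspIncrementSq, qCusp_of_pos (by linarith), qCusp_of_pos (by linarith)]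
    simp only [Function.comp, sub_add_cancel]
    ring
  rw [← integrableOn_univ, ← Iio_union_Ici, ← Icc_union_Ioi_eq_Ici zero_le_one]
  exact hleft.union (hmid.union hright)

lemma integrable_qCuspIncrementSq (h₁ : -1 < 2 * α) (h₂ : α ≤ 0) (u : ℝ) :
    Integrable (qCuspIncrementSq a b α u) := by
  have hpos {v : ℝ} (hv : 0 < v) : Integrable (qCuspIncrementSq a b α v) := by
    rw [qCuspIncrementSq_of_pos hv]
    exact ((integrable_qCuspIncrementSq_one h₁ h₂).comp_div hv.ne').const_mul _
  rcases lt_trichotomy u 0 with hu | rfl | hu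
  · obtain ⟨v, hv, rfl⟩ : ∃ v, 0 < v ∧ u = -v := ⟨-u, neg_pos.2 hu, (neg_neg u).symm⟩
    rw [qCuspIncrementSq_neg]
    exact (hpos hv).comp_add_right v
  · rw [qCuspIncrementSq_zero]
    exact integrable_zero ℝ ℝ volume
  · exact hpos hu

lemma integral_qCuspIncrementSq {u : ℝ} (hu : u ≠ 0) :
    ∫ y, qCuspIncrementSq a b α u y = |u| ^ (2 * α + 1) * ∫ x, qCuspIncrementSq a b α 1 x := by
  have hpos {v : ℝ} (hv : 0 < v) :
      ∫ y, qCuspIncrementSq a b α v y = v ^ (2 * α + 1) * ∫ x, qCuspIncrementSq a b α 1 x := by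
    rw [qCuspIncrementSq_of_pos hv, integral_const_mul, Measure.integral_comp_div,
      abs_of_pos hv, smul_eq_mul, rpow_add hv, rpow_one, mul_assoc]
  rcases hu.lt_or_gt with hu | hu
  · obtain ⟨v, hv, rfl⟩ : ∃ v, 0 < v ∧ u = -v := ⟨-u, neg_pos.2 hu, (neg_neg u).symm⟩
    rw [qCuspIncrementSq_neg, integral_add_right_eq_self, abs_neg, abs_of_pos hv]
    exact hpos hv
  · rw [abs_of_pos hu]
    exact hpos hu

end qCusp

theorem cusp_kernel_L2_neg_alpha_general (a b α : ℝ) (hα : α ∈ Set.Ioo (-(1/2) : ℝ) 0) (u : ℝ) :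
    Integrable (fun y : ℝ => (qCusp a b α (y - u) - qCusp a b α y) ^ 2) ∧
    ∫ y : ℝ, (qCusp a b α (y - u) - qCusp a b α y) ^ 2
      = |u| ^ (2 * α + 1) * ∫ x : ℝ, (qCusp a b α (x - 1) - qCusp a b α x) ^ 2 := by
  obtain ⟨hα₁, hα₂⟩ := hα
  refine ⟨integrable_qCuspIncrementSq (by linarith) hα₂.le u, ?_⟩
  rcases eq_or_ne u 0 with rfl | hu
  · simp [zero_rpow (by linarith : 2 * α + 1 ≠ 0)]
  · exact integral_qCuspIncrementSq hu

theorem cusp_kernel_L2_neg_alpha (a b α : ℝ) (ha : 0 ≤ a) (hb : 0 ≤ b)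
    (hab : ¬ (a = 0 ∧ b = 0)) (hα : α ∈ Set.Ioo (-(1/2) : ℝ) 0) (u : ℝ) :
    Integrable (fun y : ℝ => (qCusp a b α (y - u) - qCusp a b α y) ^ 2) ∧
    ∫ y : ℝ, (qCusp a b α (y - u) - qCusp a b α y) ^ 2
      = |u| ^ (2 * α + 1) * ∫ x : ℝ, (qCusp a b α (x - 1) - qCusp a b α x) ^ 2 :=
  cusp_kernel_L2_neg_alpha_general a b α hα u
end
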